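/- arXiv:1405.2399 — 4 statements merged into one kernel-verified Lean document; each statement's English description precedes it below -/
import Mathlib

section
/- For every real s > 0 and natural number n ≥ 1, ∑_{k=0}^{n} (-1)^k * C(n,k) * (s/(s+k))^2 = (∏_{k=1}^{n} k/(s+k)) * (∑_{j=0}^{n} s/(s+j)). -/
open Finset

lemma aux_prod (s : ℝ) (hs : 0 < s) (n : ℕ) :
    (s + n + 1) * ∏ k ∈ Finset.Icc 1 n, ((k : ℝ) / (s + 1 + k)) =
      (s + 1) * ∏ k ∈ Finset.Icc 1 n, ((k : ℝ) / (s + k)) := by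
  induction n with
  | zero => simp
  | succ n ih =>
    rw [Finset.prod_Icc_succ_top (by omega), Finset.prod_Icc_succ_top (by omega)]
    have h1 : (0:ℝ) < s + n + 1 := by positivity
    have h2 : (0:ℝ) < s + 1 + ((n:ℝ) + 1) := by positivity
    have h3 : (0:ℝ) < s + ((n:ℝ) + 1) := by positivity
    have hQ : ∏ k ∈ Finset.Icc 1 n, ((k : ℝ) / (s + 1 + k))
        = (s + 1) * (∏ k ∈ Finset.Icc 1 n, ((k : ℝ) / (s + k))) / (s + n + 1) := by
      rw [eq_div_iff h1.ne']
      linear_combination ih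
    push_cast
    rw [hQ]
    field_simp
    ring

lemma aux_sum (s : ℝ) (hs : 0 < s) (n : ℕ) :
    ∑ j ∈ Finset.range (n + 1), s / (s + (j + 1 : ℕ)) =
      (∑ j ∈ Finset.range (n + 1), s / (s + j)) - 1 + s / (s + (n + 1 : ℕ)) := by
  have h : ∑ j ∈ Finset.range (n + 2), s / (s + j)
      = (∑ j ∈ Finset.range (n + 1), s / (s + (j + 1 : ℕ))) + s / (s + (0:ℕ)) :=
    Finset.sum_range_succ' _ _
  have h2 : ∑ j ∈ Finset.range (n + 2), s / (s + j)
      = (∑ j ∈ Finset.range (n + 1), s / (s + j)) + s / (s + (n + 1 : ℕ)) :=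
    Finset.sum_range_succ _ _
  have h0 : s / (s + (0:ℕ)) = 1 := by
    simp [div_self hs.ne']
  rw [h0] at h
  linarith [h, h2]

lemma key (n : ℕ) : ∀ s : ℝ, 0 < s →
    ∑ k ∈ Finset.range (n + 1), (-1 : ℝ) ^ k * (n.choose k : ℝ) * (s / (s + k)) ^ 2 =
      (∏ k ∈ Finset.Icc 1 n, ((k : ℝ) / (s + k))) *
        ∑ j ∈ Finset.range (n + 1), s / (s + j) := by
  induction n with
  | zero =>
    intro s hs
    simp [div_self hs.ne']
  | succ n ih =>
    intro s hs
    have hs1 : (0:ℝ) < s + 1 := by positivity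
    -- recurrence for LHS
    have hA : ∑ k ∈ Finset.range (n + 2), (-1 : ℝ) ^ k * ((n+1).choose k : ℝ) * (s / (s + k)) ^ 2
        = (∑ k ∈ Finset.range (n + 1), (-1 : ℝ) ^ k * (n.choose k : ℝ) * (s / (s + k)) ^ 2)
          - (s / (s + 1)) ^ 2 *
            ∑ k ∈ Finset.range (n + 1), (-1 : ℝ) ^ k * (n.choose k : ℝ) * ((s+1) / ((s+1) + k)) ^ 2 := by
      rw [Finset.sum_range_succ' (fun k => (-1 : ℝ) ^ k * ((n+1).choose k : ℝ) * (s / (s + k)) ^ 2)]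
      have term : ∀ k ∈ Finset.range (n + 1),
          (-1 : ℝ) ^ (k+1) * ((n+1).choose (k+1) : ℝ) * (s / (s + (k+1:ℕ))) ^ 2
          = (-(s / (s + 1)) ^ 2) * ((-1 : ℝ) ^ k * (n.choose k : ℝ) * ((s+1) / ((s+1) + k)) ^ 2)
            + (-1 : ℝ) ^ (k+1) * (n.choose (k+1) : ℝ) * (s / (s + (k+1:ℕ))) ^ 2 := by
        intro k _
        have hk : (0:ℝ) < s + 1 + k := by positivity
        rw [Nat.choose_succ_succ]
        push_cast
        have hrw : s / (s + ((k:ℝ)+1)) = (s / (s+1)) * ((s+1)/((s+1)+k)) := by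
          rw [div_mul_div_comm]
          rw [mul_comm s (s+1)]
          rw [mul_div_mul_left]
          · ring_nf
          · exact hs1.ne'
        rw [hrw]
        ring
      rw [Finset.sum_congr rfl term, Finset.sum_add_distrib, ← Finset.mul_sum]
      have shift : ∑ k ∈ Finset.range (n + 1),
          (-1 : ℝ) ^ (k+1) * (n.choose (k+1) : ℝ) * (s / (s + (k+1:ℕ))) ^ 2
          = (∑ k ∈ Finset.range (n + 1), (-1 : ℝ) ^ k * (n.choose k : ℝ) * (s / (s + k)) ^ 2) - 1 := by
        have h := Finset.sum_range_succ' (fun k => (-1 : ℝ) ^ k * (n.choose k : ℝ) * (s / (s + k)) ^ 2) (n+1)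
        have htop : (-1 : ℝ) ^ (n+1) * (n.choose (n+1) : ℝ) * (s / (s + (n+1:ℕ))) ^ 2 = 0 := by
          simp [Nat.choose_succ_self]
        have h2 := Finset.sum_range_succ (fun k => (-1 : ℝ) ^ k * (n.choose k : ℝ) * (s / (s + k)) ^ 2) (n+1)
        have h0 : (-1 : ℝ) ^ 0 * (n.choose 0 : ℝ) * (s / (s + (0:ℕ))) ^ 2 = 1 := by
          simp [div_self hs.ne']
        rw [h2, htop, add_zero] at h
        rw [h0] at h
        linarith [h]
      rw [shift]
      have h0' : (-1 : ℝ) ^ 0 * (((n+1).choose 0 : ℕ) : ℝ) * (s / (s + (0:ℕ))) ^ 2 = 1 := by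
        simp [div_self hs.ne']
      push_cast at h0' ⊢
      linarith [h0']
    rw [hA, ih s hs, ih (s+1) hs1]
    -- now pure algebra
    have hprod := aux_prod s hs n
    have hsum := aux_sum s hs n
    have hsum1 : ∑ j ∈ Finset.range (n + 1), (s+1) / ((s+1) + j)
        = ((s+1)/s) * ((∑ j ∈ Finset.range (n + 1), s / (s + j)) - 1 + s / (s + (n+1:ℕ))) := by
      rw [← hsum, Finset.mul_sum]
      apply Finset.sum_congr rfl
      intro j _
      have hj : (0:ℝ) < s + 1 + j := by positivity
      push_cast
      rw [div_mul_div_comm]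
      rw [div_eq_div_iff (by positivity) (by push_cast; positivity)]
      ring
    rw [Finset.prod_Icc_succ_top (by omega : 1 ≤ n + 1)]
    set P := ∏ k ∈ Finset.Icc 1 n, ((k : ℝ) / (s + k)) with hPdef
    set Q := ∏ k ∈ Finset.Icc 1 n, ((k : ℝ) / (s + 1 + k)) with hQdef
    set H := ∑ j ∈ Finset.range (n + 1), s / (s + j) with hHdef
    have hn1 : (0:ℝ) < s + n + 1 := by positivity
    have hQ : Q = (s+1) * P / (s + n + 1) := by
      rw [eq_div_iff hn1.ne']
      linear_combination hprod
    have hH2 : ∑ j ∈ Finset.range (n + 2), s / (s + (j:ℕ)) = H + s / (s + ((n+1:ℕ):ℝ)) := by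
      rw [Finset.sum_range_succ]
    rw [hH2, hsum1, hQ]
    have hne1 : (0:ℝ) < s + ((n:ℝ)+1) := by positivity
    push_cast
    field_simp
    ring

theorem stmt_8 (s : ℝ) (hs : 0 < s) (n : ℕ) (hn : 1 ≤ n) :
    ∑ k ∈ Finset.range (n + 1), (-1 : ℝ) ^ k * (n.choose k : ℝ) * (s / (s + k)) ^ 2 =
      (∏ k ∈ Finset.Icc 1 n, ((k : ℝ) / (s + k))) *
        ∑ j ∈ Finset.range (n + 1), s / (s + j) := by
  exact key n s hs
end

section
/- For every real s > 0 and natural number n ≥ 1, ∏_{k=1}^{n} (k/(s+k)) · ∑_{j=1}^{n} 1/(j+s) = ∑_{k=0}^{n} (-1)^{k+1} C(n,k) · k/(k+s)^2. -/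
/-!
Both sides of `∏_{k=1}^n k/(x+k) = ∑_{k=0}^n (-1)^k C(n,k) x/(x+k)` are smooth on `x > 0`, so their
derivatives at `s` agree. The logarithmic derivative of the product is `-∑_{j=1}^n 1/(j+s)`,
while each summand `x/(x+k)` has derivative `k/(x+k)^2`. The identity itself is the partial
fraction expansion of `n!/(x(x+1)⋯(x+n))`, proved by induction on `n` via Pascal's rule.
-/

open Finset Nat Filter Topology

theorem sum_range_alternating_choose_mul_succ {R : Type*} [CommRing R] (n : ℕ) (g : ℕ → R) :
    ∑ k ∈ range (n + 2), (-1) ^ k * ((n + 1).choose k : R) * g k =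
      ∑ k ∈ range (n + 1), (-1) ^ k * (n.choose k : R) * (g k - g (k + 1)) := by
  have hshift : ∑ k ∈ range (n + 2), (-1) ^ k * (n.choose k : R) * g k =
      ∑ k ∈ range (n + 1), (-1) ^ k * (n.choose k : R) * g k := by
    simp [sum_range_succ _ (n + 1)]
  simp only [mul_sub, sum_sub_distrib]
  rw [← hshift, sum_range_succ', sum_range_succ' _ (n + 1), add_sub_right_comm,
    ← sum_sub_distrib]
  simp only [choose_succ_succ, cast_add, choose_zero_right]
  exact congrArg (· + _) (sum_congr rfl fun k _ => by ring)

section Field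

variable {K : Type*} [Field K]

theorem sum_range_alternating_choose_mul_inv_add (n : ℕ) {x : K} (hx : ∀ k ≤ n, x + k ≠ 0) :
    ∑ k ∈ range (n + 1), (-1) ^ k * (n.choose k : K) * (x + k)⁻¹ =
      n ! / ∏ k ∈ range (n + 1), (x + k) := by
  induction n generalizing x with
  | zero => simp
  | succ n ih =>
    have hx1 : ∀ k ≤ n, x + 1 + k ≠ 0 := fun k hk => by
      simpa [add_assoc, add_comm (1 : K)] using hx (k + 1) (by omega)
    have hP : ∏ k ∈ range (n + 1), (x + k) ≠ 0 :=
      prod_ne_zero_iff.2 fun k hk => hx k (by grind)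
    have hP1 : ∏ k ∈ range (n + 1), (x + 1 + k) ≠ 0 :=
      prod_ne_zero_iff.2 fun k hk => hx1 k (by grind)
    have hshift : ∏ k ∈ range (n + 2), (x + k) = (∏ k ∈ range (n + 1), (x + 1 + k)) * x := by
      rw [prod_range_succ']
      push_cast
      simp [add_assoc, add_comm (1 : K)]
    have hsucc : ∏ k ∈ range (n + 2), (x + k) =
        (∏ k ∈ range (n + 1), (x + k)) * (x + (n + 1 : ℕ)) :=
      prod_range_succ _ _
    have hQ : ∏ k ∈ range (n + 2), (x + k) ≠ 0 :=
      hshift ▸ mul_ne_zero hP1 (by simpa using hx 0 (zero_le _))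
    have hsum_shift : ∑ k ∈ range (n + 1), (-1) ^ k * (n.choose k : K) * (x + (k + 1 : ℕ))⁻¹ =
        n ! / ∏ k ∈ range (n + 1), (x + 1 + k) := by
      rw [← ih hx1]
      push_cast
      simp [add_assoc, add_comm (1 : K)]
    rw [sum_range_alternating_choose_mul_succ]
    simp only [mul_sub, sum_sub_distrib]
    rw [ih fun k hk => hx k (by omega), hsum_shift, div_sub_div _ _ hP hP1,
      div_eq_div_iff (mul_ne_zero hP hP1) hQ]
    push_cast [factorial_succ] at hsucc ⊢
    linear_combination (n ! : K) * (∏ k ∈ range (n + 1), (x + 1 + k)) * hsucc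
      - (n ! : K) * (∏ k ∈ range (n + 1), (x + k)) * hshift

theorem prod_Icc_div_add_eq_sum_alternating_choose (n : ℕ) {x : K} (hx : ∀ k ≤ n, x + k ≠ 0) :
    ∏ k ∈ Icc 1 n, (k : K) / (x + k) =
      ∑ k ∈ range (n + 1), (-1) ^ k * (n.choose k : K) * (x / (x + k)) := by
  have hfactorial : ∏ k ∈ Icc 1 n, (k : K) = n ! := by
    rw [← cast_prod, ← Ico_add_one_right_eq_Icc, prod_Ico_id_eq_factorial]
  have hsplit : ∏ k ∈ range (n + 1), (x + k) = (∏ k ∈ Icc 1 n, (x + k)) * x := by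
    rw [range_succ_eq_Icc_zero, ← prod_Ioc_mul_eq_prod_Icc (zero_le n),
      ← Icc_succ_left_eq_Ioc, Order.succ_eq_add_one, zero_add, cast_zero, add_zero]
  have hx0 : x ≠ 0 := by simpa using hx 0 (zero_le _)
  have hP : ∏ k ∈ Icc 1 n, (x + k) ≠ 0 := prod_ne_zero_iff.2 fun k hk => hx k (by grind)
  calc ∏ k ∈ Icc 1 n, (k : K) / (x + k)
      = x * ∑ k ∈ range (n + 1), (-1) ^ k * (n.choose k : K) * (x + k)⁻¹ := by
        rw [sum_range_alternating_choose_mul_inv_add n hx, hsplit, prod_div_distrib, hfactorial]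
        field_simp
    _ = _ := by
        rw [mul_sum]
        exact sum_congr rfl fun k _ => by ring

end Field

section Deriv

variable {𝕜 : Type*} [NontriviallyNormedField 𝕜]

theorem hasDerivAt_sum_alternating_choose_mul_div_add (n : ℕ) {x : 𝕜} (hx : ∀ k ≤ n, x + k ≠ 0) :
    HasDerivAt (fun y => ∑ k ∈ range (n + 1), (-1) ^ k * (n.choose k : 𝕜) * (y / (y + k)))
      (∑ k ∈ range (n + 1), (-1) ^ k * (n.choose k : 𝕜) * (k / (x + k) ^ 2)) x := by
  refine .fun_sum fun k hk => .const_mul _ ?_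
  convert (hasDerivAt_id' x).fun_div ((hasDerivAt_id' x).add_const (k : 𝕜)) (hx k (by grind))
    using 1
  ring

theorem deriv_prod_Icc_div_add [CharZero 𝕜] (n : ℕ) {x : 𝕜} (hx : ∀ k ∈ Icc 1 n, x + k ≠ 0) :
    deriv (fun y => ∏ k ∈ Icc 1 n, (k : 𝕜) / (y + k)) x =
      -((∏ k ∈ Icc 1 n, (k : 𝕜) / (x + k)) * ∑ k ∈ Icc 1 n, 1 / (x + k)) := by
  have hk0 (k) (hk : k ∈ Icc 1 n) : (k : 𝕜) ≠ 0 := by simp; grind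
  have hfactor (k) (hk : k ∈ Icc 1 n) : (k : 𝕜) / (x + k) ≠ 0 := div_ne_zero (hk0 k hk) (hx k hk)
  have hderiv (k) (hk : k ∈ Icc 1 n) :
      HasDerivAt (fun y => (k : 𝕜) / (y + k)) (-k / (x + k) ^ 2) x := by
    refine ((hasDerivAt_const x (k : 𝕜)).fun_div ((hasDerivAt_id' x).add_const (k : 𝕜))
      (hx k hk)).congr_deriv ?_
    ring
  have hlog : logDeriv (fun y => ∏ k ∈ Icc 1 n, (k : 𝕜) / (y + k)) x =
      -∑ k ∈ Icc 1 n, 1 / (x + k) := by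
    rw [logDeriv_prod hfactor fun k hk => (hderiv k hk).differentiableAt, ← sum_neg_distrib]
    refine sum_congr rfl fun k hk => ?_
    rw [logDeriv_apply, (hderiv k hk).deriv]
    field_simp [hk0 k hk, hx k hk]
  rw [← mul_neg, ← hlog, logDeriv_apply, mul_div_cancel₀ _ (prod_ne_zero_iff.2 hfactor)]

end Deriv

theorem stmt_11_general (s : ℝ) (hs : 0 < s) (n : ℕ) :
    (∏ k ∈ Finset.Icc 1 n, ((k : ℝ) / (s + k))) * ∑ j ∈ Finset.Icc 1 n, 1 / ((j : ℝ) + s) =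
      ∑ k ∈ Finset.range (n + 1), (-1 : ℝ) ^ (k + 1) * (n.choose k : ℝ) * (k / ((k : ℝ) + s) ^ 2) := by
  have hsk (k : ℕ) : s + k ≠ 0 := by positivity
  have hprod_eq_sum : (fun x : ℝ => ∏ k ∈ Icc 1 n, (k : ℝ) / (x + k)) =ᶠ[𝓝 s]
      fun x => ∑ k ∈ range (n + 1), (-1) ^ k * (n.choose k : ℝ) * (x / (x + k)) := by
    filter_upwards [Ioi_mem_nhds hs] with x (hx : 0 < x)
    exact prod_Icc_div_add_eq_sum_alternating_choose n fun k _ => by positivity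
  have hderiv := hprod_eq_sum.deriv_eq
  rw [deriv_prod_Icc_div_add n fun k _ => hsk k,
    (hasDerivAt_sum_alternating_choose_mul_div_add n fun k _ => hsk k).deriv] at hderiv
  rw [← neg_neg (_ * _)]
  simp only [add_comm (_ : ℝ) s, hderiv, ← sum_neg_distrib]
  exact sum_congr rfl fun k _ => by ring

theorem stmt_11 (s : ℝ) (hs : 0 < s) (n : ℕ) (hn : 1 ≤ n) :
    (∏ k ∈ Finset.Icc 1 n, ((k : ℝ) / (s + k))) * ∑ j ∈ Finset.Icc 1 n, 1 / ((j : ℝ) + s) =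
      ∑ k ∈ Finset.range (n + 1), (-1 : ℝ) ^ (k + 1) * (n.choose k : ℝ) * (k / ((k : ℝ) + s) ^ 2) :=
  stmt_11_general s hs n
end

section
/- For all reals s > 0 and positive integers m and n, ∑_{k=0}^{n} (-1)^k C(n,k) (s/(s+k))^m = (n/s) · ∑_{k=0}^{m-1} ∑_{j=0}^{n-1} (-1)^j C(n-1,j) (s/(s+j+1))^{k+1}. -/
/-! With `x_k = s / (s + k)` and `F t = ∑_k (-1)^k C(n,k) x_k^t`, the left side is `F m` and
`F 0 = 0`. Since `x_k^(t+1) - x_k^t = -(k/s) x_k^(t+1)` and `k C(n,k) = n C(n-1,k-1)`, each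
increment `F (t+1) - F t` is `n/s` times the inner sum of the right side, which therefore
telescopes to `F m`. -/

open Finset

lemma div_add_pow_succ_sub_pow {K : Type*} [Field K] {s a : K} (hs : s ≠ 0) (hsa : s + a ≠ 0)
    (t : ℕ) : (s / (s + a)) ^ (t + 1) - (s / (s + a)) ^ t = -(a / s) * (s / (s + a)) ^ (t + 1) := by
  have hsub : s / (s + a) - 1 = -(a / s) * (s / (s + a)) := by
    field_simp
    ring
  rw [pow_succ]
  linear_combination (s / (s + a)) ^ t * hsub

noncomputable def altBinomSum (s : ℝ) (n t : ℕ) : ℝ :=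
  ∑ k ∈ range (n + 1), (-1 : ℝ) ^ k * (n.choose k : ℝ) * (s / (s + k)) ^ t

lemma altBinomSum_zero (s : ℝ) {n : ℕ} (hn : n ≠ 0) : altBinomSum s n 0 = 0 := by
  simpa [altBinomSum] using congrArg (Int.cast : ℤ → ℝ) (Int.alternating_sum_range_choose_of_ne hn)

lemma altBinomSum_succ_sub (s : ℝ) (hs : 0 < s) (n t : ℕ) :
    altBinomSum s (n + 1) (t + 1) - altBinomSum s (n + 1) t =
      ((n + 1 : ℕ) / s) * ∑ j ∈ range (n + 1),
        (-1 : ℝ) ^ j * (n.choose j : ℝ) * (s / (s + j + 1)) ^ (t + 1) := by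
  simp only [altBinomSum, ← sum_sub_distrib, ← mul_sub, mul_sum]
  rw [sum_range_succ', Nat.cast_zero, add_zero, div_self hs.ne', one_pow, one_pow, sub_self,
    mul_zero, add_zero]
  refine sum_congr rfl fun j _ => ?_
  have hchoose : ((n + 1 : ℕ) : ℝ) * n.choose j = (n + 1).choose (j + 1) * (j + 1 : ℕ) := by
    exact_mod_cast Nat.add_one_mul_choose_eq n j
  rw [div_add_pow_succ_sub_pow hs.ne' (by positivity), Nat.cast_succ j, ← add_assoc]
  push_cast at hchoose ⊢
  linear_combination -(-1 : ℝ) ^ j * (s / (s + j + 1)) ^ (t + 1) / s * hchoose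

theorem stmt_12_general (s : ℝ) (hs : 0 < s) (m n : ℕ) (hn : 1 ≤ n) :
    ∑ k ∈ Finset.range (n + 1), (-1 : ℝ) ^ k * (n.choose k : ℝ) * (s / (s + k)) ^ m =
      ((n : ℝ) / s) * ∑ k ∈ Finset.range m, ∑ j ∈ Finset.range n,
        (-1 : ℝ) ^ j * ((n - 1).choose j : ℝ) * (s / (s + j + 1)) ^ (k + 1) := by
  obtain ⟨n, rfl⟩ := Nat.exists_eq_add_of_le' hn
  have htelescope := sum_range_sub (altBinomSum s (n + 1)) m
  rw [altBinomSum_zero s n.succ_ne_zero, sub_zero] at htelescope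
  simp only [altBinomSum_succ_sub s hs, ← mul_sum] at htelescope
  simpa [altBinomSum] using htelescope.symm

theorem stmt_12 (s : ℝ) (hs : 0 < s) (m n : ℕ) (hm : 1 ≤ m) (hn : 1 ≤ n) :
    ∑ k ∈ Finset.range (n + 1), (-1 : ℝ) ^ k * (n.choose k : ℝ) * (s / (s + k)) ^ m =
      ((n : ℝ) / s) * ∑ k ∈ Finset.range m, ∑ j ∈ Finset.range n,
        (-1 : ℝ) ^ j * ((n - 1).choose j : ℝ) * (s / (s + j + 1)) ^ (k + 1) :=
  stmt_12_general s hs m n hn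
end

section
/- For every real s > 0 and natural number n ≥ 0, ∑_{k=0}^{n} (-1)^k C(n,k) · (∏_{j=1}^{k} j/(s+j)) · (∑_{i=0}^{k} s/(s+i)) = (s/(s+n))^2, where the empty product is 1 and the i=0 term of the inner sum is 1. -/
/-!
Write `g s j = (s / (s + j))²`. The alternating sum `∑ⱼ (-1)ʲ C(k,j) g s j` is `(-1)ᵏ Δᵏ (g s) 0`,
so by Newton's forward-difference formula the theorem is the binomial inversion of the identity
`(-1)ᵏ Δᵏ (g s) 0 = Pₖ(s) Hₖ(s)` with `Pₖ(s) = ∏_{j=1}^k j/(s+j)` and `Hₖ(s) = ∑_{i=0}^k s/(s+i)`.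
That identity follows by induction on `k` for all `s > 0` at once: since
`g s (j + 1) = (s/(s+1))² g (s + 1) j`, one has
`(-1)ᵏ⁺¹ Δᵏ⁺¹ (g s) 0 = (-1)ᵏ Δᵏ (g s) 0 - (s/(s+1))² (-1)ᵏ Δᵏ (g (s+1)) 0`,
and `Pₖ Hₖ` satisfies the same recursion.
-/

open Finset fwdDiff

section BinomialInversion

variable {R : Type*} [CommRing R]

theorem neg_one_pow_mul_self (m : ℕ) : (-1 : R) ^ m * (-1) ^ m = 1 := by
  rw [← mul_pow]; simp

theorem sum_range_neg_one_pow_mul_choose_mul_eq_fwdDiff_iter (f : ℕ → R) (k : ℕ) :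
    ∑ j ∈ range (k + 1), (-1 : R) ^ j * k.choose j * f j = (-1) ^ k * (Δ_[1])^[k] f 0 := by
  rw [fwdDiff_iter_eq_sum_shift, mul_sum]
  refine sum_congr rfl fun j hj => ?_
  obtain ⟨m, rfl⟩ := Nat.exists_eq_add_of_le (Nat.lt_succ_iff.mp (mem_range.mp hj))
  rw [zsmul_eq_mul, zero_add, nsmul_one, Nat.cast_id, Nat.add_sub_cancel_left]
  push_cast
  linear_combination
    (-(-1) ^ j * ((j + m).choose j : R) * f j) * neg_one_pow_mul_self (R := R) m

theorem alternating_binomial_inversion (f : ℕ → R) (n : ℕ) :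
    ∑ k ∈ range (n + 1), (-1 : R) ^ k * n.choose k *
      ∑ j ∈ range (k + 1), (-1 : R) ^ j * k.choose j * f j = f n := by
  have newton := shift_eq_sum_fwdDiff_iter (1 : ℕ) f n 0
  rw [zero_add, smul_eq_mul, mul_one] at newton
  refine (sum_congr rfl fun k _ => ?_).trans newton.symm
  rw [sum_range_neg_one_pow_mul_choose_mul_eq_fwdDiff_iter, nsmul_eq_mul]
  linear_combination (n.choose k * (Δ_[1])^[k] f 0) * neg_one_pow_mul_self (R := R) k

end BinomialInversion

/-- `recipChoose s k = 1 / C(s + k, k)`, for the generalized binomial coefficient. -/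
noncomputable def recipChoose (s : ℝ) (k : ℕ) : ℝ := ∏ j ∈ Icc 1 k, (j : ℝ) / (s + j)

noncomputable def scaledHarmonic (s : ℝ) (k : ℕ) : ℝ := ∑ i ∈ range (k + 1), s / (s + i)

theorem recipChoose_succ (s : ℝ) (k : ℕ) :
    recipChoose s (k + 1) = recipChoose s k * ((k + 1) / (s + k + 1)) := by
  rw [recipChoose, prod_Icc_succ_top (Nat.le_add_left 1 k), add_assoc]
  push_cast
  rfl

theorem recipChoose_add_one {s : ℝ} (hs : s + 1 ≠ 0) (k : ℕ) :
    recipChoose (s + 1) k = recipChoose s k * ((s + 1) / (s + k + 1)) := by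
  induction k with
  | zero => simp [recipChoose, hs]
  | succ k ih =>
    rw [recipChoose_succ, ih, recipChoose_succ]
    push_cast
    ring

theorem scaledHarmonic_succ (s : ℝ) (k : ℕ) :
    scaledHarmonic s (k + 1) = scaledHarmonic s k + s / (s + k + 1) := by
  rw [scaledHarmonic, sum_range_succ, add_assoc]
  push_cast
  rfl

theorem scaledHarmonic_add_one {s : ℝ} (hs : s ≠ 0) (k : ℕ) :
    scaledHarmonic (s + 1) k = (s + 1) / s * (scaledHarmonic s (k + 1) - 1) := by
  rw [scaledHarmonic, scaledHarmonic, sum_range_succ' (fun i => s / (s + i)), Nat.cast_zero,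
    add_zero, div_self hs, add_sub_cancel_right, mul_sum]
  refine sum_congr rfl fun i _ => ?_
  rw [div_mul_div_cancel₀ hs]
  push_cast
  ring_nf

theorem recipChoose_mul_scaledHarmonic_succ {s : ℝ} (hs : 0 < s) (k : ℕ) :
    recipChoose s (k + 1) * scaledHarmonic s (k + 1) =
      recipChoose s k * scaledHarmonic s k -
        (s / (s + 1)) ^ 2 * (recipChoose (s + 1) k * scaledHarmonic (s + 1) k) := by
  have hk : s + k + 1 ≠ 0 := by positivity
  rw [recipChoose_succ, recipChoose_add_one (by positivity), scaledHarmonic_add_one hs.ne',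
    scaledHarmonic_succ]
  field_simp
  ring

theorem neg_one_pow_mul_fwdDiff_iter_sq_div {s : ℝ} (hs : 0 < s) (k : ℕ) :
    (-1) ^ k * (Δ_[1])^[k] (fun j : ℕ => (s / (s + j)) ^ 2) 0 =
      recipChoose s k * scaledHarmonic s k := by
  induction k generalizing s with
  | zero => simp [recipChoose, scaledHarmonic, hs.ne']
  | succ k ih =>
    have hs1 : 0 < s + 1 := by linarith
    have shift : (fun j : ℕ => (s / (s + ↑(j + 1))) ^ 2) =
        (s / (s + 1)) ^ 2 • fun j : ℕ => ((s + 1) / (s + 1 + j)) ^ 2 := by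
      ext j
      rw [Pi.smul_apply, smul_eq_mul, ← mul_pow, div_mul_div_cancel₀ hs1.ne']
      push_cast
      ring_nf
    rw [Function.iterate_succ_apply', fwdDiff, ← zero_add 1, ← fwdDiff_iter_comp_add, zero_add,
      shift, fwdDiff_iter_const_smul, Pi.smul_apply, smul_eq_mul,
      recipChoose_mul_scaledHarmonic_succ hs, ← ih hs, ← ih hs1]
    ring

theorem stmt_14 (s : ℝ) (hs : 0 < s) (n : ℕ) :
    ∑ k ∈ Finset.range (n + 1), (-1 : ℝ) ^ k * (n.choose k : ℝ) *
        (∏ j ∈ Finset.Icc 1 k, ((j : ℝ) / (s + j))) *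
        (∑ i ∈ Finset.range (k + 1), s / (s + i)) =
      (s / (s + n)) ^ 2 := by
  have forward (k : ℕ) : recipChoose s k * scaledHarmonic s k =
      ∑ j ∈ range (k + 1), (-1 : ℝ) ^ j * k.choose j * (s / (s + j)) ^ 2 := by
    rw [sum_range_neg_one_pow_mul_choose_mul_eq_fwdDiff_iter,
      neg_one_pow_mul_fwdDiff_iter_sq_div hs]
  refine (sum_congr rfl fun k _ => ?_).trans
    (alternating_binomial_inversion (fun j : ℕ => (s / (s + j)) ^ 2) n)
  rw [mul_assoc]
  exact congrArg _ (forward k)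
end
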